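/- arXiv:1909.04268 — 7 statements merged into one kernel-verified Lean document; each statement's English description precedes it below -/
import Mathlib

section
/- If a distribution D over subsets of a matroid's ground set satisfies E[|R ∩ F|] ≤ α · E[rank(R ∩ F)] for every subset F of the ground set (where R ∼ D), then for every nonnegative weight vector w, E[rank_w(R)] ≥ (1/α) · E[w(R)]. -/
open Finset BigOperators
open scoped Classical

structure FinMatroid (γ : Type*) [DecidableEq γ] [Fintype γ] where
  Indep : Finset γ → Prop
  indep_empty : Indep ∅
  indep_subset : ∀ ⦃A B : Finset γ⦄, Indep B → A ⊆ B → Indep A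
  indep_exchange : ∀ ⦃A B : Finset γ⦄, Indep A → Indep B → A.card < B.card →
    ∃ x ∈ B, x ∉ A ∧ Indep (insert x A)

variable {γ : Type*} [DecidableEq γ] [Fintype γ]

/-- The rank of a set `A`: maximum cardinality of an independent subset of `A`. -/
noncomputable def FinMatroid.rank (M : FinMatroid γ) (A : Finset γ) : ℕ :=
  (A.powerset.filter fun S => M.Indep S).sup Finset.card

/-- The weighted rank of a set `A`: maximum weight of an independent subset of `A`. -/
noncomputable def FinMatroid.wrank (M : FinMatroid γ) (w : γ → ℝ) (A : Finset γ) : ℝ :=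
  (A.powerset.filter fun S => M.Indep S).sup'
    ⟨∅, by simp [M.indep_empty]⟩ (fun S => ∑ i ∈ S, w i)

/-- A distribution over subsets of the ground set. -/
structure FinDist (γ : Type*) [DecidableEq γ] [Fintype γ] where
  p : Finset γ → ℝ
  nonneg : ∀ S, 0 ≤ p S
  sum_one : ∑ S : Finset γ, p S = 1

/-- Marginal probability of element `i` under distribution `D`. -/
noncomputable def FinDist.marg (D : FinDist γ) (i : γ) : ℝ :=
  ∑ R : Finset γ, D.p R * (if i ∈ R then 1 else 0)

/-- A (randomized) contention resolution map: `q R S` is the probability that the map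
outputs `S` on input `R`; the output is always an independent subset of the input. -/
structure CRM (M : FinMatroid γ) where
  q : Finset γ → Finset γ → ℝ
  nonneg : ∀ R S, 0 ≤ q R S
  sum_one : ∀ R, ∑ S : Finset γ, q R S = 1
  feasible : ∀ R S, q R S ≠ 0 → S ⊆ R ∧ M.Indep S

/-- Probability that element `i` is selected by the CRM `φ` when the input is drawn from `D`. -/
noncomputable def selProb (M : FinMatroid γ) (D : FinDist γ) (φ : CRM M) (i : γ) : ℝ :=
  ∑ R : Finset γ, D.p R * ∑ S : Finset γ, φ.q R S * (if i ∈ S then 1 else 0)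

/-- `φ` is `a`-competitive for `D` : `Pr[i ∈ R] ≤ a · Pr[i ∈ φ(R)]` for all `i`. -/
def Competitive (M : FinMatroid γ) (D : FinDist γ) (a : ℝ) (φ : CRM M) : Prop :=
  ∀ i : γ, D.marg i ≤ a * selProb M D φ i

/-- `D` is `a`-uncontentious: it admits an `a`-competitive contention resolution map. -/
def Uncontentious (M : FinMatroid γ) (D : FinDist γ) (a : ℝ) : Prop :=
  ∃ φ : CRM M, Competitive M D a φ

/-- `D` is `a`-uncontentious, weighted-rank form: `E[rank_w(R)] ≥ (1/a)·E[w(R)]` for all `w ≥ 0`. -/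
def UncontentiousW (M : FinMatroid γ) (D : FinDist γ) (a : ℝ) : Prop :=
  ∀ w : γ → ℝ, (∀ i, 0 ≤ w i) →
    ∑ R : Finset γ, D.p R * M.wrank w R ≥ (1 / a) * ∑ R : Finset γ, D.p R * ∑ i ∈ R, w i

/-! Write `w = w' + m·1_F`, where `F` contains the support of `w` and `m` is the least weight on
`F`, so that `w'` is supported on a proper subset of `F`. Extending an optimal independent set for
`w'` inside `F` to a basis of `A ∩ F` shows `rank_w(A) ≥ rank_{w'}(A) + m·rank(A ∩ F)`. Taking
expectations, the hypothesis for `F` handles the term `m·1_F` and induction on `F` handles `w'`. -/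

namespace FinMatroid

theorem sum_le_wrank (M : FinMatroid γ) (w : γ → ℝ) {S A : Finset γ} (hS : M.Indep S)
    (hSA : S ⊆ A) : ∑ i ∈ S, w i ≤ M.wrank w A :=
  le_sup' (fun S => ∑ i ∈ S, w i) (by simp [hSA, hS])

theorem exists_wrank_eq_sum (M : FinMatroid γ) (w : γ → ℝ) (A : Finset γ) :
    ∃ S ⊆ A, M.Indep S ∧ M.wrank w A = ∑ i ∈ S, w i := by
  obtain ⟨S, hS, hSw⟩ := exists_mem_eq_sup' (s := A.powerset.filter fun S => M.Indep S)
    ⟨∅, by simp [M.indep_empty]⟩ (fun S => ∑ i ∈ S, w i)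
  rw [mem_filter, mem_powerset] at hS
  exact ⟨S, hS.1, hS.2, hSw⟩

theorem exists_card_eq_rank (M : FinMatroid γ) (A : Finset γ) :
    ∃ T ⊆ A, M.Indep T ∧ T.card = M.rank A := by
  obtain ⟨T, hT, hTc⟩ := exists_mem_eq_sup (A.powerset.filter fun S => M.Indep S)
    ⟨∅, by simp [M.indep_empty]⟩ card
  rw [mem_filter, mem_powerset] at hT
  exact ⟨T, hT.1, hT.2, hTc.symm⟩

theorem exists_superset_rank_le_card (M : FinMatroid γ) {S A : Finset γ} (hS : M.Indep S)
    (hSA : S ⊆ A) : ∃ B, S ⊆ B ∧ B ⊆ A ∧ M.Indep B ∧ M.rank A ≤ B.card := by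
  by_cases hc : M.rank A ≤ S.card
  · exact ⟨S, subset_rfl, hSA, hS, hc⟩
  obtain ⟨T, hTA, hT, hTc⟩ := M.exists_card_eq_rank A
  obtain ⟨x, hxT, hxS, hxS_indep⟩ := M.indep_exchange hS hT (by omega)
  obtain ⟨B, hSB, hBA, hB, hBc⟩ :=
    M.exists_superset_rank_le_card hxS_indep (insert_subset (hTA hxT) hSA)
  exact ⟨B, (subset_insert x S).trans hSB, hBA, hB, hBc⟩
termination_by M.rank A - S.card
decreasing_by have := card_insert_of_notMem hxS; omega

theorem wrank_nonneg (M : FinMatroid γ) (w : γ → ℝ) (A : Finset γ) :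
    0 ≤ M.wrank w A :=
  (M.sum_le_wrank w M.indep_empty (empty_subset A)).trans' (by simp)

end FinMatroid

theorem sum_add_ite_mem {ι : Type*} [DecidableEq ι] (f : ι → ℝ) (m : ℝ) (R F : Finset ι) :
    ∑ i ∈ R, (f i + if i ∈ F then m else 0) = ∑ i ∈ R, f i + m * (R ∩ F).card := by
  rw [sum_add_distrib, sum_ite_mem, sum_const, nsmul_eq_mul, mul_comm]

theorem FinMatroid.wrank_add_mul_rank_le (M : FinMatroid γ) {w : γ → ℝ} {F : Finset γ} {m : ℝ}
    (hw : ∀ i, 0 ≤ w i) (hwF : ∀ i ∉ F, w i = 0) (hm : 0 ≤ m) (A : Finset γ) :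
    M.wrank w A + m * M.rank (A ∩ F) ≤ M.wrank (fun i => w i + if i ∈ F then m else 0) A := by
  obtain ⟨S, hSA, hS, hSw⟩ := M.exists_wrank_eq_sum w A
  obtain ⟨B, hSB, hBAF, hB, hBc⟩ := M.exists_superset_rank_le_card
    (M.indep_subset hS inter_subset_left) (inter_subset_inter_right hSA)
  have hBF : B ∩ F = B := inter_eq_left.mpr (hBAF.trans inter_subset_right)
  calc M.wrank w A + m * M.rank (A ∩ F)
      = ∑ i ∈ S ∩ F, w i + m * M.rank (A ∩ F) := by
        rw [hSw, sum_subset inter_subset_left fun i _ hi => hwF i (by simp_all)]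
    _ ≤ ∑ i ∈ B, w i + m * (B ∩ F).card := by
        rw [hBF]
        gcongr
        exact fun i _ _ => hw i
    _ = ∑ i ∈ B, (w i + if i ∈ F then m else 0) := (sum_add_ite_mem w m B F).symm
    _ ≤ _ := M.sum_le_wrank _ hB (hBAF.trans inter_subset_left)

theorem exists_eq_add_ite_mem {ι : Type*} [DecidableEq ι] {w : ι → ℝ} {F : Finset ι}
    (hw : ∀ i, 0 ≤ w i) (hwF : ∀ i ∉ F, w i = 0) (hF : F.Nonempty) :
    ∃ i₀ ∈ F, ∃ m, 0 ≤ m ∧ ∃ w' : ι → ℝ, (∀ i, 0 ≤ w' i) ∧ (∀ i ∉ F.erase i₀, w' i = 0) ∧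
      w = fun i => w' i + if i ∈ F then m else 0 := by
  obtain ⟨i₀, hi₀, hm⟩ := exists_mem_eq_inf' hF w
  refine ⟨i₀, hi₀, F.inf' hF w, hm ▸ hw i₀, fun i => if i ∈ F then w i - F.inf' hF w else 0,
    fun i => ?_, fun i hi => ?_, funext fun i => ?_⟩ <;> by_cases hiF : i ∈ F
  · simpa only [hiF, if_true, sub_nonneg] using inf'_le w hiF
  · simp [hiF]
  · obtain rfl : i = i₀ := by simpa [hiF] using hi
    simp [hm]
  · simp [hiF]
  · simp [hiF]
  · simp [hiF, hwF i hiF]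

theorem sum_weight_le_mul_sum_wrank (M : FinMatroid γ) (D : FinDist γ) {a : ℝ} (ha : 0 ≤ a)
    (h : ∀ F : Finset γ,
      ∑ R : Finset γ, D.p R * ((R ∩ F).card : ℝ) ≤
        a * ∑ R : Finset γ, D.p R * (M.rank (R ∩ F) : ℝ))
    (w : γ → ℝ) (hw : ∀ i, 0 ≤ w i) :
    ∑ R : Finset γ, D.p R * ∑ i ∈ R, w i ≤ a * ∑ R : Finset γ, D.p R * M.wrank w R := by
  have hwF : ∀ i ∉ (univ : Finset γ), w i = 0 := fun i hi => absurd (mem_univ i) hi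
  generalize (univ : Finset γ) = F at hwF
  induction F using Finset.strongInduction generalizing w with
  | H F ih =>
  rcases F.eq_empty_or_nonempty with rfl | hF
  · have hw0 : ∀ i, w i = 0 := fun i => hwF i (notMem_empty i)
    simp only [hw0, sum_const_zero, mul_zero]
    exact mul_nonneg ha <| sum_nonneg fun R _ =>
      mul_nonneg (D.nonneg R) (M.wrank_nonneg w R)
  obtain ⟨i₀, hi₀, m, hm, w', hw', hw'F, hw_eq⟩ := exists_eq_add_ite_mem hw hwF hF
  calc ∑ R, D.p R * ∑ i ∈ R, w i
      = ∑ R, D.p R * ∑ i ∈ R, w' i + m * ∑ R, D.p R * ((R ∩ F).card : ℝ) := by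
        rw [mul_sum, ← sum_add_distrib]
        refine sum_congr rfl fun R _ => ?_
        rw [hw_eq, sum_add_ite_mem]
        ring
    _ ≤ a * ∑ R, D.p R * M.wrank w' R + m * (a * ∑ R, D.p R * (M.rank (R ∩ F) : ℝ)) := by
        gcongr
        · exact ih _ (erase_ssubset hi₀) w' hw' hw'F
        · exact h F
    _ = a * ∑ R, D.p R * (M.wrank w' R + m * M.rank (R ∩ F)) := by
        simp only [mul_sum, ← sum_add_distrib]
        exact sum_congr rfl fun R _ => by ring
    _ ≤ a * ∑ R, D.p R * M.wrank w R := by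
        rw [hw_eq]
        gcongr with R
        exacts [D.nonneg R,
          M.wrank_add_mul_rank_le hw' (fun i hi => hw'F i (mt mem_of_mem_erase hi)) hm R]

/-- if `E[|R ∩ F|] ≤ a · E[rank(R ∩ F)]` for every `F`, then for every
nonnegative weight vector `w`, `E[rank_w(R)] ≥ (1/a) · E[w(R)]`. -/
theorem stmt1 (M : FinMatroid γ) (D : FinDist γ) (a : ℝ) (ha : 1 ≤ a)
    (h : ∀ F : Finset γ,
      ∑ R : Finset γ, D.p R * ((R ∩ F).card : ℝ) ≤
        a * ∑ R : Finset γ, D.p R * (M.rank (R ∩ F) : ℝ)) :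
    ∀ w : γ → ℝ, (∀ i, 0 ≤ w i) →
      ∑ R : Finset γ, D.p R * M.wrank w R ≥
        (1 / a) * ∑ R : Finset γ, D.p R * ∑ i ∈ R, w i := by
  intro w hw
  have ha₀ : 0 < a := zero_lt_one.trans_le ha
  rw [ge_iff_le, one_div_mul_eq_div, div_le_iff₀' ha₀]
  exact sum_weight_le_mul_sum_wrank M D ha₀.le h w hw
end

section
/- If a distribution D over subsets of a matroid's ground set satisfies E[rank_w(R)] ≥ (1/α)·E[w(R)] for every nonnegative weight vector w, then there exists an α-competitive contention resolution map for D. -/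
open Finset BigOperators
open scoped Classical

variable {γ : Type*} [DecidableEq γ] [Fintype γ]

/-! The vector `Pr[i ∈ R] / a` is dominated coordinatewise by a convex combination of the
marginal vectors `Pr[i ∈ f R]` of deterministic selection rules `f` (with `f R` an independent
subset of `R`); running these rules with the convex weights is an `a`-competitive CRM. Were
there no such combination, a hyperplane would separate the vector from the downward closure of
the convex hull; downward closedness makes its normal `w` nonnegative, and then the rule choosing
a maximum-`w`-weight independent subset of `R` contradicts `E[rank_w R] ≥ E[w(R)] / a`. -/

open scoped Pointwise in
theorem exists_mem_stdSimplex_le_sum_smul_of_forall_nonneg {ι κ : Type*} [Fintype ι]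
    [Fintype κ] (v : κ → ι → ℝ) (x : ι → ℝ)
    (h : ∀ w : ι → ℝ, 0 ≤ w → ∃ k, ∑ i, w i * x i ≤ ∑ i, w i * v k i) :
    ∃ t ∈ stdSimplex ℝ κ, x ≤ ∑ k, t k • v k := by
  by_contra hx
  set L := Fintype.linearCombination ℝ v
  set K : Set (ι → ℝ) := L '' stdSimplex ℝ κ + Set.Iic 0
  have hK_lower : ∀ k, ∀ y ≤ v k, y ∈ K := fun k y hy =>
    ⟨v k, ⟨Pi.single k 1, single_mem_stdSimplex ℝ k, by simp [L]⟩, y - v k,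
      sub_nonpos.mpr hy, add_sub_cancel _ _⟩
  have hxK : x ∉ K := by
    rintro ⟨_, ⟨t, ht, rfl⟩, c, hc, rfl⟩
    exact hx ⟨t, ht, (add_le_of_nonpos_right (a := L t) hc).trans_eq
      (Fintype.linearCombination_apply ℝ v t)⟩
  have himage_compact : IsCompact (L '' stdSimplex ℝ κ) :=
    (isCompact_stdSimplex ℝ κ).image (LinearMap.continuous_of_finiteDimensional L)
  have hK_convex : Convex ℝ K :=
    ((convex_stdSimplex ℝ κ).linear_image L).add (convex_Iic 0)
  obtain ⟨φ, u, hφx, hφK⟩ := geometric_hahn_banach_point_closed hK_convex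
    (isClosed_Iic.add_left_of_isCompact himage_compact) hxK
  set e : ι → ι → ℝ := fun i j => if i = j then 1 else 0
  set w : ι → ℝ := fun i => -φ (e i)
  have hφ : ∀ z, φ z = -∑ i, w i * z i := fun z => by
    simpa [w, mul_comm] using LinearMap.pi_apply_eq_sum_univ (φ : (ι → ℝ) →ₗ[ℝ] ℝ) z
  obtain ⟨k₀, -⟩ := h 0 le_rfl
  have hw : 0 ≤ w := by
    intro i
    by_contra! hi
    set s := (φ (v k₀) - u) / w i
    have hs : s ≤ 0 := div_nonpos_of_nonneg_of_nonpos
      (sub_nonneg.mpr (hφK _ (hK_lower k₀ _ le_rfl)).le) hi.le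
    have he : 0 ≤ e i := fun j => by by_cases i = j <;> simp [e, *]
    have := hφK (v k₀ + s • e i)
      (hK_lower k₀ _ (add_le_of_nonpos_right (smul_nonpos_of_nonpos_of_nonneg hs he)))
    rw [map_add, map_smul, smul_eq_mul, show φ (e i) = -w i from (neg_neg _).symm, mul_neg,
      div_mul_cancel₀ _ hi.ne] at this
    linarith
  obtain ⟨k, hk⟩ := h w hw
  linarith [hφK _ (hK_lower k _ le_rfl), hφ x, hφ (v k)]

def FinMatroid.IsSelection (M : FinMatroid γ) (f : Finset γ → Finset γ) : Prop :=
  ∀ R, f R ⊆ R ∧ M.Indep (f R)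

noncomputable def FinDist.mapMarg (D : FinDist γ) (f : Finset γ → Finset γ) (i : γ) : ℝ :=
  ∑ R : Finset γ, D.p R * (if i ∈ f R then 1 else 0)

theorem FinDist.sum_mul_mapMarg (D : FinDist γ) (w : γ → ℝ) (f : Finset γ → Finset γ) :
    ∑ i, w i * D.mapMarg f i = ∑ R : Finset γ, D.p R * ∑ i ∈ f R, w i := by
  simp only [FinDist.mapMarg, Finset.mul_sum, mul_ite, mul_one, mul_zero]
  rw [Finset.sum_comm]
  refine Finset.sum_congr rfl fun R _ => ?_
  rw [← Finset.sum_filter, Finset.filter_mem_eq_inter, Finset.univ_inter]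
  exact Finset.sum_congr rfl fun i _ => mul_comm _ _

theorem FinDist.sum_mul_marg (D : FinDist γ) (w : γ → ℝ) :
    ∑ i, w i * D.marg i = ∑ R : Finset γ, D.p R * ∑ i ∈ R, w i :=
  D.sum_mul_mapMarg w id

theorem FinMatroid.exists_isSelection_sum_eq_wrank (M : FinMatroid γ) (w : γ → ℝ) :
    ∃ f, M.IsSelection f ∧ ∀ R, ∑ i ∈ f R, w i = M.wrank w R := by
  have : ∀ R, ∃ S, (S ⊆ R ∧ M.Indep S) ∧ ∑ i ∈ S, w i = M.wrank w R := fun R => by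
    obtain ⟨S, hS, hSw⟩ := Finset.exists_mem_eq_sup' _ fun S : Finset γ => ∑ i ∈ S, w i
    exact ⟨S, by simpa using hS, hSw.symm⟩
  choose f hf hfw using this
  exact ⟨f, hf, hfw⟩

noncomputable def CRM.mixture {M : FinMatroid γ} {κ : Type*} [Fintype κ]
    (f : κ → Finset γ → Finset γ) (hf : ∀ k, M.IsSelection (f k)) (t : κ → ℝ)
    (ht : t ∈ stdSimplex ℝ κ) : CRM M where
  q R S := ∑ k, if f k R = S then t k else 0
  nonneg R S := Finset.sum_nonneg fun k _ => by split_ifs; exacts [ht.1 k, le_rfl]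
  sum_one R := by rw [Finset.sum_comm, ← ht.2]; simp
  feasible R S hq := by
    obtain ⟨k, -, hk⟩ := Finset.exists_ne_zero_of_sum_ne_zero hq
    obtain rfl : f k R = S := by by_contra hne; simp [hne] at hk
    exact hf k R

theorem selProb_mixture {M : FinMatroid γ} (D : FinDist γ) {κ : Type*} [Fintype κ]
    (f : κ → Finset γ → Finset γ) (hf : ∀ k, M.IsSelection (f k)) (t : κ → ℝ)
    (ht : t ∈ stdSimplex ℝ κ) (i : γ) :
    selProb M D (CRM.mixture f hf t ht) i = ∑ k, t k * D.mapMarg (f k) i := by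
  have hinner : ∀ R, ∑ S, (∑ k, if f k R = S then t k else 0) * (if i ∈ S then 1 else 0) =
      ∑ k, t k * (if i ∈ f k R then 1 else 0) := fun R => by
    simp only [Finset.sum_mul, ite_mul, zero_mul]
    rw [Finset.sum_comm]
    simp
  simp only [selProb, CRM.mixture, hinner, FinDist.mapMarg, Finset.mul_sum]
  rw [Finset.sum_comm]
  simp only [mul_left_comm]

/-- if `E[rank_w(R)] ≥ (1/a)·E[w(R)]` for every nonnegative `w`, then
there exists an `a`-competitive contention resolution map for `D`. -/
theorem stmt2 (M : FinMatroid γ) (D : FinDist γ) (a : ℝ) (ha : 1 ≤ a)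
    (h : ∀ w : γ → ℝ, (∀ i, 0 ≤ w i) →
      ∑ R : Finset γ, D.p R * M.wrank w R ≥
        (1 / a) * ∑ R : Finset γ, D.p R * ∑ i ∈ R, w i) :
    ∃ phi : CRM M, Competitive M D a phi := by
  have ha₀ : 0 < a := one_pos.trans_le ha
  obtain ⟨t, ht, hle⟩ := exists_mem_stdSimplex_le_sum_smul_of_forall_nonneg
    (fun f : {f // M.IsSelection f} => D.mapMarg f.1) (fun i => D.marg i / a) fun w hw => by
      obtain ⟨f, hf, hfw⟩ := M.exists_isSelection_sum_eq_wrank w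
      refine ⟨⟨f, hf⟩, ?_⟩
      calc ∑ i, w i * (D.marg i / a) = 1 / a * ∑ R : Finset γ, D.p R * ∑ i ∈ R, w i := by
            rw [← D.sum_mul_marg, Finset.mul_sum]
            exact Finset.sum_congr rfl fun i _ => by ring
        _ ≤ ∑ R : Finset γ, D.p R * M.wrank w R := h w hw
        _ = ∑ i, w i * D.mapMarg f i := by simp only [D.sum_mul_mapMarg, hfw]
  refine ⟨CRM.mixture _ (fun f => f.2) t ht, fun i => ?_⟩
  rw [selProb_mixture, ← div_le_iff₀' ha₀]
  simpa using hle i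
end

section
/- If f: 2^E → ℝ₊ is submodular with f(∅) = 0 and monotone, R is a random subset of E, and R' is obtained by retaining each element of R independently with probability p, then E[f(R')] ≥ p·E[f(R)]. -/
open Finset BigOperators
open scoped Classical

variable {γ : Type*} [DecidableEq γ] [Fintype γ]

/-!
Conditioning on `R`, it suffices to show `E[f(R(p))] ≥ (1 - p) f(∅) + p f(R)` for a fixed
set `R`, which holds for every submodular `f`. Induct on `R`: after adding a new element `x`,
the sample either skips `x`, or contains `x` together with a sample `t ⊆ R`; by submodularity
`x` adds at least its marginal value `f(R ∪ {x}) - f(R)` to `f(t)`, so the inequality survives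
with weight `p` on that marginal value.
-/

section Sampling

variable {α : Type*}

/-- The probability that keeping each element of `s` independently with probability `p`
produces exactly `t`, for `t ⊆ s`. -/
def keepProb (p : ℝ) (s t : Finset α) : ℝ :=
  p ^ t.card * (1 - p) ^ (s.card - t.card)

lemma keepProb_nonneg {p : ℝ} (hp0 : 0 ≤ p) (hp1 : p ≤ 1) (s t : Finset α) :
    0 ≤ keepProb p s t :=
  mul_nonneg (pow_nonneg hp0 _) (pow_nonneg (sub_nonneg.mpr hp1) _)

lemma sum_powerset_keepProb (p : ℝ) (s : Finset α) :
    ∑ t ∈ s.powerset, keepProb p s t = 1 := by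
  simp [keepProb, sum_pow_mul_eq_add_pow]

lemma sum_powerset_insert_keepProb_mul [DecidableEq α] {x : α} {s : Finset α} (hx : x ∉ s)
    (p : ℝ) (g : Finset α → ℝ) :
    ∑ t ∈ (insert x s).powerset, keepProb p (insert x s) t * g t =
      (1 - p) * ∑ t ∈ s.powerset, keepProb p s t * g t +
        p * ∑ t ∈ s.powerset, keepProb p s t * g (insert x t) := by
  rw [sum_powerset_insert hx, mul_sum, mul_sum]
  congr 1 <;> refine sum_congr rfl fun t ht => ?_ <;> rw [mem_powerset] at ht
  · rw [keepProb, keepProb, card_insert_of_notMem hx, Nat.succ_sub (card_le_card ht), pow_succ]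
    ring
  · rw [keepProb, keepProb, card_insert_of_notMem hx,
      card_insert_of_notMem fun hxt => hx (ht hxt), Nat.succ_sub_succ, pow_succ]
    ring

lemma insert_sub_le_insert_sub_of_subset [DecidableEq α] {f : Finset α → ℝ}
    (hsub : ∀ A B : Finset α, f (A ∪ B) + f (A ∩ B) ≤ f A + f B)
    {x : α} {s t : Finset α} (hts : t ⊆ s) (hx : x ∉ s) :
    f (insert x s) - f s ≤ f (insert x t) - f t := by
  have h := hsub (insert x t) s
  rw [insert_union, union_eq_right.mpr hts, insert_inter_of_notMem hx,
    inter_eq_left.mpr hts] at h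
  linarith

lemma add_mul_le_sum_powerset_keepProb_mul [DecidableEq α] {f : Finset α → ℝ}
    (hsub : ∀ A B : Finset α, f (A ∪ B) + f (A ∩ B) ≤ f A + f B)
    {p : ℝ} (hp0 : 0 ≤ p) (hp1 : p ≤ 1) (s : Finset α) :
    (1 - p) * f ∅ + p * f s ≤ ∑ t ∈ s.powerset, keepProb p s t * f t := by
  induction s using Finset.induction with
  | empty =>
    simp only [powerset_empty, sum_singleton, keepProb, card_empty, Nat.sub_zero, pow_zero,
      one_mul]
    linarith
  | @insert x s hx ih =>
    rw [sum_powerset_insert_keepProb_mul hx]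
    set c := f (insert x s) - f s
    have hgain : ∑ t ∈ s.powerset, keepProb p s t * f t + c ≤
        ∑ t ∈ s.powerset, keepProb p s t * f (insert x t) := by
      calc ∑ t ∈ s.powerset, keepProb p s t * f t + c
          = ∑ t ∈ s.powerset, keepProb p s t * f t +
              (∑ t ∈ s.powerset, keepProb p s t) * c := by
            rw [sum_powerset_keepProb, one_mul]
        _ = ∑ t ∈ s.powerset, keepProb p s t * (f t + c) := by
            simp only [sum_mul, ← sum_add_distrib, mul_add]
        _ ≤ ∑ t ∈ s.powerset, keepProb p s t * f (insert x t) := by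
            refine sum_le_sum fun t ht =>
              mul_le_mul_of_nonneg_left ?_ (keepProb_nonneg hp0 hp1 s t)
            linarith [insert_sub_le_insert_sub_of_subset hsub (mem_powerset.mp ht) hx]
    have hp_gain := mul_le_mul_of_nonneg_left hgain hp0
    have hc : f (insert x s) = f s + c := by ring
    rw [hc]
    linarith

lemma sum_mul_eq_sum_mul_sum_powerset_keepProb [DecidableEq α] [Fintype α] {p : ℝ}
    {q q' : Finset α → ℝ}
    (hq' : ∀ T, q' T = ∑ R, q R * if T ⊆ R then keepProb p R T else 0)
    (g : Finset α → ℝ) :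
    ∑ T, q' T * g T = ∑ R, q R * ∑ t ∈ R.powerset, keepProb p R t * g t := by
  simp only [hq', sum_mul]
  rw [sum_comm]
  refine sum_congr rfl fun R _ => ?_
  have hfilter : univ.filter (· ⊆ R) = R.powerset := by ext; simp
  rw [mul_sum, ← hfilter, sum_filter]
  refine sum_congr rfl fun T _ => ?_
  split_ifs <;> ring

end Sampling

theorem stmt8_general (f : Finset γ → ℝ) (hempty : f ∅ = 0)
    (hsub : ∀ A B : Finset γ, f (A ∪ B) + f (A ∩ B) ≤ f A + f B)
    (p : ℝ) (hp0 : 0 ≤ p) (hp1 : p ≤ 1)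
    (D D' : FinDist γ)
    (hD' : ∀ T : Finset γ, D'.p T =
      ∑ R : Finset γ, D.p R *
        (if T ⊆ R then p ^ T.card * (1 - p) ^ (R.card - T.card) else 0)) :
    ∑ T : Finset γ, D'.p T * f T ≥ p * ∑ R : Finset γ, D.p R * f R := by
  rw [sum_mul_eq_sum_mul_sum_powerset_keepProb hD', ge_iff_le, mul_sum]
  refine sum_le_sum fun R _ => ?_
  have hR := add_mul_le_sum_powerset_keepProb_mul hsub hp0 hp1 R
  rw [hempty, mul_zero, zero_add] at hR
  calc p * (D.p R * f R) = D.p R * (p * f R) := mul_left_comm _ _ _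
    _ ≤ _ := mul_le_mul_of_nonneg_left hR (D.nonneg R)

/-- for a nonnegative monotone submodular `f` with `f ∅ = 0`, if `R'` retains
each element of the random set `R` independently with probability `p`, then
`E[f(R')] ≥ p · E[f(R)]`. -/
theorem stmt8 (f : Finset γ → ℝ) (hnn : ∀ S, 0 ≤ f S) (hempty : f ∅ = 0)
    (hmono : ∀ A B : Finset γ, A ⊆ B → f A ≤ f B)
    (hsub : ∀ A B : Finset γ, f (A ∪ B) + f (A ∩ B) ≤ f A + f B)
    (p : ℝ) (hp0 : 0 ≤ p) (hp1 : p ≤ 1)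
    (D D' : FinDist γ)
    (hD' : ∀ T : Finset γ, D'.p T =
      ∑ R : Finset γ, D.p R *
        (if T ⊆ R then p ^ T.card * (1 - p) ^ (R.card - T.card) else 0)) :
    ∑ T : Finset γ, D'.p T * f T ≥ p * ∑ R : Finset γ, D.p R * f R :=
  stmt8_general f hempty hsub p hp0 hp1 D D' hD'
end

section
/- Let M be a matroid with m pairwise-disjoint bases B_1,...,B_m. Define the random set R with Pr[R = B_1 ∪ ... ∪ B_k] = 2^{-k} for k = 1,...,m-1 and Pr[R = B_1 ∪ ... ∪ B_m] = 2^{1-m}. Then R is 2-uncontentious, as witnessed by the contention resolution map φ(B_1 ∪ ... ∪ B_k) = B_k. -/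
open Finset BigOperators
open scoped Classical

variable {γ : Type*} [DecidableEq γ] [Fintype γ]

/-- The union of the first `k` of the given sets. -/
def unionUpTo (B : ℕ → Finset γ) (k : ℕ) : Finset γ := (Finset.range k).biUnion B

/-!
The input is always a prefix union `B 0 ∪ ⋯ ∪ B (k-1)`, and the map keeps its last base.
An element of `B j` lies in the input exactly when `k > j`, which happens with probability
`2^{-(j+1)} + ⋯ + 2^{-(m-1)} + 2^{1-m} = 2^{-j}`, while it is selected exactly when `k = j + 1`,
which happens with probability at least `2^{-(j+1)}`.
-/

lemma FinMatroid.card_eq_of_maximal (M : FinMatroid γ) {A A' : Finset γ}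
    (hA : M.Indep A ∧ ∀ S, M.Indep S → S.card ≤ A.card)
    (hA' : M.Indep A' ∧ ∀ S, M.Indep S → S.card ≤ A'.card) : A.card = A'.card :=
  le_antisymm (hA'.2 A hA.1) (hA.2 A' hA'.1)

namespace CRM

noncomputable def ofMap (M : FinMatroid γ) (f : Finset γ → Finset γ)
    (hf : ∀ R, f R ⊆ R ∧ M.Indep (f R)) : CRM M where
  q R S := if S = f R then 1 else 0
  nonneg R S := by split_ifs <;> norm_num
  sum_one R := by simp
  feasible R S h := by
    obtain rfl : S = f R := by by_contra hS; exact h (if_neg hS)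
    exact hf R

lemma ofMap_q_self {M : FinMatroid γ} (f : Finset γ → Finset γ)
    (hf : ∀ R, f R ⊆ R ∧ M.Indep (f R)) (R : Finset γ) : (ofMap M f hf).q R (f R) = 1 :=
  if_pos rfl

end CRM

lemma selProb_ofMap (M : FinMatroid γ) (D : FinDist γ) (f : Finset γ → Finset γ)
    (hf : ∀ R, f R ⊆ R ∧ M.Indep (f R)) (i : γ) :
    selProb M D (CRM.ofMap M f hf) i = ∑ R, D.p R * if i ∈ f R then 1 else 0 := by
  simp only [selProb, CRM.ofMap, ite_mul, one_mul, zero_mul, sum_ite_eq', mem_univ, if_true]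

lemma selProb_nonneg (M : FinMatroid γ) (D : FinDist γ) (φ : CRM M) (i : γ) :
    0 ≤ selProb M D φ i :=
  sum_nonneg fun R _ => mul_nonneg (D.nonneg R) <|
    sum_nonneg fun S _ => mul_nonneg (φ.nonneg R S) (by split_ifs <;> norm_num)

lemma FinDist.sum_p_mul_eq_of_p_eq {ι : Type*} (D : FinDist γ) (s : Finset ι)
    (X : ι → Finset γ) (a : ι → ℝ)
    (hD : ∀ S, D.p S = ∑ k ∈ s, if S = X k then a k else 0)
    (g : Finset γ → ℝ) : ∑ R, D.p R * g R = ∑ k ∈ s, a k * g (X k) := by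
  simp_rw [hD, sum_mul, ite_mul, zero_mul]
  rw [sum_comm]
  simp

noncomputable def prefixWeight (m k : ℕ) : ℝ := if k = m then 2⁻¹ ^ (m - 1) else 2⁻¹ ^ k

lemma sum_ite_eq_sum_Icc_prefixWeight {β : Type*} [DecidableEq β] {m : ℕ} (hm : 1 ≤ m)
    (X : ℕ → β) (S : β) :
    (∑ k ∈ Icc 1 (m - 1), if S = X k then ((2 : ℝ)⁻¹) ^ k else 0)
        + (if S = X m then ((2 : ℝ)⁻¹) ^ (m - 1) else 0)
      = ∑ k ∈ Icc 1 m, if S = X k then prefixWeight m k else 0 := by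
  obtain ⟨n, rfl⟩ : ∃ n, m = n + 1 := ⟨m - 1, by omega⟩
  rw [Nat.add_sub_cancel, sum_Icc_succ_top (by omega)]
  congr 1
  · refine sum_congr rfl fun k hk => ?_
    rw [prefixWeight, if_neg (show k ≠ n + 1 by rw [mem_Icc] at hk; omega)]
  · simp [prefixWeight]

lemma sum_Icc_prefixWeight {m j : ℕ} (hj : j < m) :
    ∑ k ∈ Icc (j + 1) m, prefixWeight m k = 2⁻¹ ^ j := by
  have hm : 1 ≤ m := by omega
  have hle : j ≤ m - 1 := by omega
  clear hj
  induction hle using Nat.decreasingInduction with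
  | self => rw [Nat.sub_add_cancel (by omega), Icc_self, sum_singleton, prefixWeight, if_pos rfl]
  | of_succ j hj' ih =>
    rw [← insert_Icc_add_one_left_eq_Icc (by omega), sum_insert (by simp), ih,
      prefixWeight, if_neg (by omega)]
    ring

lemma pow_le_prefixWeight (m k : ℕ) : (2 : ℝ)⁻¹ ^ k ≤ prefixWeight m k := by
  unfold prefixWeight
  split_ifs with h
  · exact pow_le_pow_of_le_one (by norm_num) (by norm_num) (h ▸ Nat.sub_le m 1)
  · exact le_rfl

section PrefixUnion

variable {α : Type*} {B : ℕ → Finset α} {m j : ℕ} {x : α}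

lemma eq_of_mem_of_mem (hdisj : ∀ i j, i < j → j < m → Disjoint (B i) (B j))
    {i : ℕ} (hi : i < m) (hj : j < m) (hxi : x ∈ B i) (hxj : x ∈ B j) : i = j := by
  by_contra hij
  rcases lt_or_gt_of_ne hij with h | h
  · exact disjoint_left.mp (hdisj i j h hj) hxi hxj
  · exact disjoint_left.mp (hdisj j i h hi) hxj hxi

variable [DecidableEq α]

lemma mem_unionUpTo {k : ℕ} : x ∈ unionUpTo B k ↔ ∃ l < k, x ∈ B l := by
  simp [unionUpTo]

lemma mem_unionUpTo_iff_lt (hdisj : ∀ i j, i < j → j < m → Disjoint (B i) (B j))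
    {k : ℕ} (hj : j < m) (hx : x ∈ B j) (hk : k ≤ m) : x ∈ unionUpTo B k ↔ j < k := by
  refine ⟨fun h => ?_, fun h => mem_unionUpTo.mpr ⟨j, h, hx⟩⟩
  obtain ⟨l, hl, hxl⟩ := mem_unionUpTo.mp h
  rwa [eq_of_mem_of_mem hdisj hj (by omega) hx hxl]

/-- A later base contained in an earlier prefix union is disjoint from it, hence empty. -/
lemma eq_empty_of_unionUpTo_eq (hdisj : ∀ i j, i < j → j < m → Disjoint (B i) (B j))
    {k k' : ℕ} (hkk' : k < k') (hk' : k' ≤ m) (h : unionUpTo B k = unionUpTo B k') :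
    B (k' - 1) = ∅ := by
  refine eq_empty_of_forall_notMem fun x hx => ?_
  have hxk : x ∈ unionUpTo B k := h ▸ mem_unionUpTo.mpr ⟨k' - 1, by omega, hx⟩
  have := (mem_unionUpTo_iff_lt hdisj (by omega) hx (hkk'.le.trans hk')).mp hxk
  omega

lemma pred_eq_of_unionUpTo_eq (hdisj : ∀ i j, i < j → j < m → Disjoint (B i) (B j))
    (hcard : ∀ i j, i < m → j < m → (B i).card = (B j).card) {k k' : ℕ}
    (hk : k ∈ Icc 1 m) (hk' : k' ∈ Icc 1 m) (h : unionUpTo B k = unionUpTo B k') :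
    B (k - 1) = B (k' - 1) := by
  rw [mem_Icc] at hk hk'
  have of_empty : ∀ a b, a - 1 < m → b - 1 < m → B (a - 1) = ∅ → B (a - 1) = B (b - 1) :=
    fun a b ha hb he => by rw [he, eq_comm, ← card_eq_zero, hcard _ _ hb ha, he, card_empty]
  rcases lt_trichotomy k k' with hlt | rfl | hgt
  · exact (of_empty k' k (by omega) (by omega) (eq_empty_of_unionUpTo_eq hdisj hlt hk'.2 h)).symm
  · rfl
  · exact of_empty k k' (by omega) (by omega) (eq_empty_of_unionUpTo_eq hdisj hgt hk.2 h.symm)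

noncomputable def prefixSel (B : ℕ → Finset α) (m : ℕ) (R : Finset α) : Finset α :=
  if h : ∃ k ∈ Icc 1 m, R = unionUpTo B k then B (h.choose - 1) else ∅

lemma prefixSel_unionUpTo (hdisj : ∀ i j, i < j → j < m → Disjoint (B i) (B j))
    (hcard : ∀ i j, i < m → j < m → (B i).card = (B j).card) {k : ℕ} (hk : k ∈ Icc 1 m) :
    prefixSel B m (unionUpTo B k) = B (k - 1) := by
  have h : ∃ k' ∈ Icc 1 m, unionUpTo B k = unionUpTo B k' := ⟨k, hk, rfl⟩
  rw [prefixSel, dif_pos h]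
  exact pred_eq_of_unionUpTo_eq hdisj hcard h.choose_spec.1 hk h.choose_spec.2.symm

lemma prefixSel_subset_and {P : Finset α → Prop} (hP : ∀ i < m, P (B i)) (hP₀ : P ∅)
    (R : Finset α) : prefixSel B m R ⊆ R ∧ P (prefixSel B m R) := by
  unfold prefixSel
  split_ifs with h
  · obtain ⟨hk, hR⟩ := h.choose_spec
    rw [mem_Icc] at hk
    refine ⟨fun x hx => ?_, hP _ (by omega)⟩
    rw [hR]
    exact mem_unionUpTo.mpr ⟨_, by omega, hx⟩
  · exact ⟨empty_subset R, hP₀⟩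

lemma sum_prefixWeight_mem_unionUpTo (hdisj : ∀ i j, i < j → j < m → Disjoint (B i) (B j))
    (hj : j < m) (hx : x ∈ B j) :
    ∑ k ∈ Icc 1 m, prefixWeight m k * (if x ∈ unionUpTo B k then 1 else 0) = 2⁻¹ ^ j :=
  calc ∑ k ∈ Icc 1 m, prefixWeight m k * (if x ∈ unionUpTo B k then 1 else 0)
      = ∑ k ∈ Icc 1 m with j < k, prefixWeight m k := by
        rw [sum_filter]
        refine sum_congr rfl fun k hk => ?_
        simp only [mem_unionUpTo_iff_lt hdisj hj hx (mem_Icc.mp hk).2, mul_ite, mul_one, mul_zero]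
    _ = ∑ k ∈ Icc (j + 1) m, prefixWeight m k := by
        congr 1
        ext k
        simp only [mem_filter, mem_Icc]
        omega
    _ = 2⁻¹ ^ j := sum_Icc_prefixWeight hj

lemma sum_prefixWeight_mem_pred (hdisj : ∀ i j, i < j → j < m → Disjoint (B i) (B j))
    (hj : j < m) (hx : x ∈ B j) :
    ∑ k ∈ Icc 1 m, prefixWeight m k * (if x ∈ B (k - 1) then 1 else 0)
      = prefixWeight m (j + 1) :=
  calc ∑ k ∈ Icc 1 m, prefixWeight m k * (if x ∈ B (k - 1) then 1 else 0)
      = ∑ k ∈ Icc 1 m, if k = j + 1 then prefixWeight m k else 0 := by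
        refine sum_congr rfl fun k hk => ?_
        rw [mem_Icc] at hk
        have : x ∈ B (k - 1) ↔ k = j + 1 :=
          ⟨fun h => by have := eq_of_mem_of_mem hdisj hj (by omega) hx h; omega,
            fun h => by rwa [h, Nat.add_sub_cancel]⟩
        simp only [this, mul_ite, mul_one, mul_zero]
    _ = prefixWeight m (j + 1) := by
        rw [sum_ite_eq', if_pos (mem_Icc.mpr ⟨by omega, by omega⟩)]

end PrefixUnion

lemma competitive_two_prefixSel (M : FinMatroid γ) {m : ℕ} {B : ℕ → Finset γ}
    (hindep : ∀ i < m, M.Indep (B i))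
    (hcard : ∀ i j, i < m → j < m → (B i).card = (B j).card)
    (hdisj : ∀ i j, i < j → j < m → Disjoint (B i) (B j)) (D : FinDist γ)
    (hD : ∀ S, D.p S = ∑ k ∈ Icc 1 m, if S = unionUpTo B k then prefixWeight m k else 0) :
    Competitive M D 2
      (CRM.ofMap M (prefixSel B m) (prefixSel_subset_and hindep M.indep_empty)) := by
  intro i
  have hE := D.sum_p_mul_eq_of_p_eq _ _ _ hD
  by_cases hi : ∃ j < m, i ∈ B j
  · obtain ⟨j, hj, hij⟩ := hi
    rw [FinDist.marg, selProb_ofMap, hE, hE, sum_prefixWeight_mem_unionUpTo hdisj hj hij,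
      sum_congr rfl fun k hk => by rw [prefixSel_unionUpTo hdisj hcard hk],
      sum_prefixWeight_mem_pred hdisj hj hij]
    calc (2 : ℝ)⁻¹ ^ j = 2 * 2⁻¹ ^ (j + 1) := by ring
      _ ≤ 2 * prefixWeight m (j + 1) := by gcongr; exact pow_le_prefixWeight m (j + 1)
  · have hmarg : D.marg i = 0 := by
      rw [FinDist.marg, hE]
      refine sum_eq_zero fun k hk => ?_
      rw [if_neg, mul_zero]
      intro hik
      obtain ⟨l, hl, hil⟩ := mem_unionUpTo.mp hik
      exact hi ⟨l, by rw [mem_Icc] at hk; omega, hil⟩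
    rw [hmarg]
    exact mul_nonneg zero_le_two (selProb_nonneg M D _ i)

/-- for a matroid with `m` pairwise-disjoint bases `B 0, …, B (m-1)` and the
distribution `Pr[R = B 0 ∪ ⋯ ∪ B (k-1)] = 2^{-k}` for `k = 1,…,m-1`,
`Pr[R = B 0 ∪ ⋯ ∪ B (m-1)] = 2^{1-m}`, the contention resolution map sending
`B 0 ∪ ⋯ ∪ B (k-1)` to `B (k-1)` witnesses that `R` is `2`-uncontentious. -/
theorem stmt10 (M : FinMatroid γ) (m : ℕ) (hm : 1 ≤ m) (B : ℕ → Finset γ)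
    (hbase : ∀ i, i < m → M.Indep (B i) ∧ ∀ A : Finset γ, M.Indep A → A.card ≤ (B i).card)
    (hdisj : ∀ i j, i < j → j < m → Disjoint (B i) (B j))
    (D : FinDist γ)
    (hD : ∀ S : Finset γ, D.p S =
      (∑ k ∈ Finset.Icc 1 (m - 1), if S = unionUpTo B k then ((2 : ℝ)⁻¹) ^ k else 0)
        + (if S = unionUpTo B m then ((2 : ℝ)⁻¹) ^ (m - 1) else 0)) :
    ∃ phi : CRM M, Competitive M D 2 phi ∧
      ∀ k, 1 ≤ k → k ≤ m → phi.q (unionUpTo B k) (B (k - 1)) = 1 := by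
  have hindep : ∀ i < m, M.Indep (B i) := fun i hi => (hbase i hi).1
  have hcard : ∀ i j, i < m → j < m → (B i).card = (B j).card :=
    fun i j hi hj => M.card_eq_of_maximal (hbase i hi) (hbase j hj)
  refine ⟨CRM.ofMap M (prefixSel B m) (prefixSel_subset_and hindep M.indep_empty),
    competitive_two_prefixSel M hindep hcard hdisj D
      fun S => (hD S).trans (sum_ite_eq_sum_Icc_prefixWeight hm _ S),
    fun k hk₁ hkm => ?_⟩
  rw [← prefixSel_unionUpTo hdisj hcard (mem_Icc.mpr ⟨hk₁, hkm⟩)]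
  exact CRM.ofMap_q_self _ _ _
end

section
/- The 1-uniform matroid on n elements does not admit an oblivious β-competitive α-universal contention resolution scheme for any 1 < α ≤ β < n; i.e., there is no single contention resolution map φ that is β-competitive for every α-uncontentious distribution. -/
open Finset BigOperators
open scoped Classical

variable {γ : Type*} [DecidableEq γ] [Fintype γ]

/-!
Averaging over the ground set, any map `φ` selects some element `i₀` from the full set
`[n]` with probability at most `1 / n`. The adversary draws `[n]` with probability `ε` and
otherwise a singleton `{j}`, `j ≠ i₀`, with probability `c` each, where `ε + c = a * c`.
Resolving `[n]` to `{i₀}` shows this distribution is `a`-uncontentious, since `i₀` arrives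
only inside `[n]`; but `i₀` arrives with probability `ε` while `φ` keeps it with probability
at most `ε / n < ε / b`.
-/

namespace CRM

variable {M : FinMatroid γ}

noncomputable def probMem (φ : CRM M) (R : Finset γ) (i : γ) : ℝ :=
  ∑ S : Finset γ, φ.q R S * if i ∈ S then 1 else 0

lemma probMem_eq_zero_of_notMem (φ : CRM M) {R : Finset γ} {i : γ} (hi : i ∉ R) :
    φ.probMem R i = 0 := by
  refine Finset.sum_eq_zero fun S _ => ?_
  by_cases hS : φ.q R S = 0
  · rw [hS, zero_mul]
  · have hiS : i ∉ S := fun h => hi ((φ.feasible R S hS).1 h)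
    rw [if_neg hiS, mul_zero]

lemma sum_probMem_le_one (hM : ∀ S, M.Indep S → S.card ≤ 1) (φ : CRM M) (R : Finset γ) :
    ∑ i, φ.probMem R i ≤ 1 := by
  have hcard : ∑ i, φ.probMem R i = ∑ S : Finset γ, φ.q R S * S.card := by
    unfold probMem
    rw [Finset.sum_comm]
    refine Finset.sum_congr rfl fun S _ => ?_
    simp [mul_comm]
  rw [hcard, ← φ.sum_one R]
  refine Finset.sum_le_sum fun S _ => ?_
  by_cases hS : φ.q R S = 0
  · simp [hS]
  · have hS1 : (S.card : ℝ) ≤ 1 := by exact_mod_cast hM S (φ.feasible R S hS).2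
    nlinarith [φ.nonneg R S]

lemma exists_probMem_le_inv_card [Nonempty γ] (hM : ∀ S, M.Indep S → S.card ≤ 1)
    (φ : CRM M) (R : Finset γ) : ∃ i, φ.probMem R i ≤ 1 / Fintype.card γ := by
  have hsum : ∑ i, φ.probMem R i ≤ ∑ _i : γ, (1 / Fintype.card γ : ℝ) := by
    have hγ : (Fintype.card γ : ℝ) ≠ 0 := by positivity
    simpa [Finset.card_univ, hγ] using φ.sum_probMem_le_one hM R
  obtain ⟨i, -, hi⟩ := Finset.exists_le_of_sum_le Finset.univ_nonempty hsum
  exact ⟨i, hi⟩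

noncomputable def ofFun (f : Finset γ → Finset γ) (hf : ∀ R, f R ⊆ R ∧ M.Indep (f R)) :
    CRM M where
  q R S := if S = f R then 1 else 0
  nonneg R S := by positivity
  sum_one R := by simp
  feasible R S h := by
    obtain rfl : S = f R := by_contra fun hS => h (if_neg hS)
    exact hf R

lemma probMem_ofFun (f : Finset γ → Finset γ) (hf : ∀ R, f R ⊆ R ∧ M.Indep (f R))
    (R : Finset γ) (i : γ) : (ofFun f hf).probMem R i = if i ∈ f R then 1 else 0 := by
  simp only [probMem, ofFun, ite_mul, one_mul, zero_mul, Finset.sum_ite_eq', Finset.mem_univ,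
    if_true]

end CRM

lemma selProb_eq_sum_probMem (M : FinMatroid γ) (D : FinDist γ) (φ : CRM M) (i : γ) :
    selProb M D φ i = ∑ R, D.p R * φ.probMem R i :=
  rfl

noncomputable def fullOrSingletonWeight (i₀ : γ) (ε c : ℝ) (R : Finset γ) : ℝ :=
  (if R = univ then ε else 0) + ∑ j ∈ univ.erase i₀, if R = {j} then c else 0

lemma sum_fullOrSingletonWeight_mul (i₀ : γ) (ε c : ℝ) (g : Finset γ → ℝ) :
    ∑ R, fullOrSingletonWeight i₀ ε c R * g R = ε * g univ + c * ∑ j ∈ univ.erase i₀, g {j} := by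
  simp only [fullOrSingletonWeight, add_mul, Finset.sum_add_distrib, ite_mul, zero_mul,
    Finset.sum_mul, Finset.sum_ite_eq', Finset.mem_univ, if_true, Finset.mul_sum]
  rw [Finset.sum_comm]
  simp

noncomputable def FinDist.fullOrSingleton (i₀ : γ) {ε c : ℝ} (hε : 0 ≤ ε) (hc : 0 ≤ c)
    (hsum : ε + (Fintype.card γ - 1) * c = 1) : FinDist γ where
  p := fullOrSingletonWeight i₀ ε c
  nonneg R := by
    unfold fullOrSingletonWeight
    have := Finset.sum_nonneg fun j (_ : j ∈ univ.erase i₀) =>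
      (by positivity : (0 : ℝ) ≤ if R = {j} then c else 0)
    positivity
  sum_one := by
    have h := sum_fullOrSingletonWeight_mul i₀ ε c fun _ => 1
    rw [Finset.sum_const, nsmul_eq_mul, Finset.cast_card_erase_of_mem (Finset.mem_univ i₀),
      Finset.card_univ] at h
    simp only [mul_one] at h
    linarith

lemma FinDist.fullOrSingleton_p (i₀ : γ) {ε c : ℝ} (hε : 0 ≤ ε) (hc : 0 ≤ c)
    (hsum : ε + (Fintype.card γ - 1) * c = 1) :
    (FinDist.fullOrSingleton i₀ hε hc hsum).p = fullOrSingletonWeight i₀ ε c :=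
  rfl

section fullOrSingleton

variable {i₀ : γ} {ε c : ℝ} {hε : 0 ≤ ε} {hc : 0 ≤ c} {hsum : ε + (Fintype.card γ - 1) * c = 1}

lemma FinDist.marg_fullOrSingleton (i : γ) :
    (FinDist.fullOrSingleton i₀ hε hc hsum).marg i = ε + if i = i₀ then 0 else c := by
  rw [FinDist.marg, FinDist.fullOrSingleton_p, sum_fullOrSingletonWeight_mul]
  by_cases hi : i = i₀ <;> simp [hi, Finset.sum_ite_eq]

lemma selProb_fullOrSingleton_self (M : FinMatroid γ) (φ : CRM M) :
    selProb M (FinDist.fullOrSingleton i₀ hε hc hsum) φ i₀ = ε * φ.probMem univ i₀ := by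
  rw [selProb_eq_sum_probMem, FinDist.fullOrSingleton_p, sum_fullOrSingletonWeight_mul,
    Finset.sum_eq_zero fun j hj => φ.probMem_eq_zero_of_notMem
      (by simpa [eq_comm] using Finset.ne_of_mem_erase hj), mul_zero, add_zero]

lemma FinDist.uncontentious_fullOrSingleton (M : FinMatroid γ)
    (hM : ∀ S, M.Indep S ↔ S.card ≤ 1) (hγ : 2 ≤ Fintype.card γ) {a : ℝ} (ha : 1 ≤ a)
    (hεc : ε + c ≤ a * c) : Uncontentious M (FinDist.fullOrSingleton i₀ hε hc hsum) a := by
  let f : Finset γ → Finset γ := fun R => if R.card ≤ 1 then R else R ∩ {i₀}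
  have hf : ∀ R, f R ⊆ R ∧ M.Indep (f R) := by
    intro R
    by_cases hR : R.card ≤ 1
    · simp [f, hR, hM]
    · simp only [f, if_neg hR, hM]
      exact ⟨Finset.inter_subset_left, (Finset.card_le_card Finset.inter_subset_right).trans
        (Finset.card_singleton i₀).le⟩
  have hfuniv : f univ = {i₀} := by
    simp [f, Finset.card_univ, show ¬Fintype.card γ ≤ 1 by omega]
  refine ⟨CRM.ofFun f hf, fun i => ?_⟩
  rw [FinDist.marg_fullOrSingleton, selProb_eq_sum_probMem, FinDist.fullOrSingleton_p,
    sum_fullOrSingletonWeight_mul]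
  simp only [CRM.probMem_ofFun, hfuniv, f, Finset.card_singleton, le_refl, if_true,
    Finset.mem_singleton, Finset.sum_ite_eq, Finset.mem_erase, Finset.mem_univ, and_true]
  by_cases hi : i = i₀
  · simp only [hi, if_true, ne_eq, not_true_eq_false, if_false]
    nlinarith
  · simp only [hi, if_false, ne_eq, not_false_eq_true, if_true]
    linarith

end fullOrSingleton

/-- the 1-uniform matroid on `n` elements admits no oblivious `b`-competitive
`a`-universal CRS for `1 < a ≤ b < n`: every single contention resolution map `phi` fails
to be `b`-competitive for some `a`-uncontentious distribution. -/
theorem stmt11 (n : ℕ) (M : FinMatroid (Fin n))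
    (hM : ∀ S : Finset (Fin n), M.Indep S ↔ S.card ≤ 1)
    (a b : ℝ) (ha : 1 < a) (hab : a ≤ b) (hb : b < n) :
    ∀ phi : CRM M, ∃ D : FinDist (Fin n),
      Uncontentious M D a ∧ ¬ Competitive M D b phi := by
  intro phi
  have hn : 2 ≤ n := by exact_mod_cast (by linarith : (1 : ℝ) < n)
  have : Nonempty (Fin n) := ⟨⟨0, by omega⟩⟩
  obtain ⟨i₀, hi₀⟩ := phi.exists_probMem_le_inv_card (fun S => (hM S).1) univ
  rw [Fintype.card_fin] at hi₀
  -- With `ε = (a - 1) * c`, this `c` solves `ε + c = a * c` and `ε + (n - 1) * c = 1`.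
  set c : ℝ := 1 / (n - 2 + a)
  have hc : 0 < c := by
    have : (2 : ℝ) ≤ n := by exact_mod_cast hn
    positivity
  have hsum : (a - 1) * c + (Fintype.card (Fin n) - 1) * c = 1 := by
    rw [Fintype.card_fin, ← add_mul, mul_one_div, div_eq_one_iff_eq (by linarith)]
    ring
  refine ⟨FinDist.fullOrSingleton i₀ (by positivity) hc.le hsum,
    FinDist.uncontentious_fullOrSingleton M hM (by simpa using hn) ha.le (by linarith), ?_⟩
  intro hphi
  have hbx : b * phi.probMem univ i₀ < 1 :=
    calc b * phi.probMem univ i₀ ≤ b * (1 / n) := by gcongr; linarith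
      _ < 1 := by rw [mul_one_div, div_lt_one (by linarith)]; exact hb
  have hcomp := hphi i₀
  rw [FinDist.marg_fullOrSingleton, selProb_fullOrSingleton_self, if_pos rfl, add_zero] at hcomp
  have hε : 0 < (a - 1) * c := mul_pos (by linarith) hc
  nlinarith [mul_lt_mul_of_pos_left hbx hε]
end

section
/- Let M be a matroid with distinct weights w, p ∈ (0,1), S a p-sample of the ground set, R the set of improving elements, and F any subset of the ground set. Then E[rank(R ∩ F)] ≥ (1−p)·E[|F ∩ OPT_w(S ∪ F)|]. -/
/-!
An element `i ∈ F ∩ OPT_w(S ∪ F)` outside `S` is improving: membership in `OPT_w` passes to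
every subset containing the element, here to `S ∪ {i}`. Since `OPT_w(S ∪ F)` is independent,
these elements form an independent subset of `R ∩ F`. For `i ∈ F` the set `S ∪ F` does not
depend on whether `i ∈ S`, so each `i ∈ F ∩ OPT_w(S ∪ F)` lies outside `S` with conditional
probability `1 - p`.
-/

open Finset BigOperators
open scoped Classical

variable {γ : Type*} [DecidableEq γ] [Fintype γ]

/-- Probability of sampling `S` when each of the `n` ground elements is included
independently with probability `p`. -/
noncomputable def prodP (p : ℝ) (S : Finset γ) : ℝ :=
  p ^ S.card * (1 - p) ^ (Fintype.card γ - S.card)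

/-- The maximum-weight independent subset of `A` (for distinct positive weights, via the
greedy characterization: `i ∈ OPT_w(A)` iff `w i > 0` and `i` is not spanned by the
higher-weight elements of `A`), excluding zero-weight elements. -/
noncomputable def FinMatroid.OPT (M : FinMatroid γ) (w : γ → ℝ) (A : Finset γ) : Finset γ :=
  A.filter fun i => 0 < w i ∧
    M.rank (A.filter fun j => w i < w j) < M.rank (insert i (A.filter fun j => w i < w j))

/-- The set of improving elements given the sample `S`: elements outside `S` that
belong to `OPT_w(S ∪ {i})`. -/
noncomputable def FinMatroid.Improving (M : FinMatroid γ) (w : γ → ℝ) (S : Finset γ) : Finset γ :=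
  Finset.univ.filter fun i => i ∉ S ∧ i ∈ M.OPT w (insert i S)

namespace FinMatroid

variable (M : FinMatroid γ)

lemma card_le_rank {T A : Finset γ} (hT : M.Indep T) (hTA : T ⊆ A) : T.card ≤ M.rank A :=
  le_sup (mem_filter.2 ⟨mem_powerset.2 hTA, hT⟩)

lemma rank_le_card (A : Finset γ) : M.rank A ≤ A.card :=
  Finset.sup_le fun _ hT => card_le_card (mem_powerset.1 (mem_filter.1 hT).1)

lemma exists_indep_card_eq_rank (A : Finset γ) :
    ∃ B ⊆ A, M.Indep B ∧ B.card = M.rank A := by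
  obtain ⟨B, hB, hBc⟩ := exists_mem_eq_sup _
    ⟨∅, mem_filter.2 ⟨empty_mem_powerset A, M.indep_empty⟩⟩ Finset.card
  obtain ⟨hBA, hBi⟩ := mem_filter.1 hB
  exact ⟨B, mem_powerset.1 hBA, hBi, hBc.symm⟩

lemma rank_eq_card_of_indep {T : Finset γ} (hT : M.Indep T) : M.rank T = T.card :=
  le_antisymm (M.rank_le_card T) (M.card_le_rank hT subset_rfl)

lemma indep_of_rank_eq_card {T : Finset γ} (h : M.rank T = T.card) : M.Indep T := by
  obtain ⟨B, hBT, hB, hBc⟩ := M.exists_indep_card_eq_rank T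
  rwa [← eq_of_subset_of_card_le hBT (by omega)]

lemma exists_indep_superset_card_eq_rank {T A : Finset γ} (hT : M.Indep T) (hTA : T ⊆ A) :
    ∃ B, T ⊆ B ∧ B ⊆ A ∧ M.Indep B ∧ B.card = M.rank A := by
  induction h : M.rank A - T.card generalizing T with
  | zero => exact ⟨T, subset_rfl, hTA, hT, by have := M.card_le_rank hT hTA; omega⟩
  | succ n ih =>
    obtain ⟨C, hCA, hC, hCc⟩ := M.exists_indep_card_eq_rank A
    obtain ⟨x, hxC, hxT, hx⟩ := M.indep_exchange hT hC (by omega)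
    obtain ⟨B, hTB, hBA, hB, hBc⟩ :=
      ih hx (insert_subset (hCA hxC) hTA) (by rw [card_insert_of_notMem hxT]; omega)
    exact ⟨B, (subset_insert x T).trans hTB, hBA, hB, hBc⟩

lemma indep_insert_of_rank_lt {T : Finset γ} {i : γ} (hT : M.Indep T)
    (h : M.rank T < M.rank (insert i T)) : M.Indep (insert i T) := by
  refine M.indep_of_rank_eq_card (le_antisymm (M.rank_le_card _) ?_)
  have := card_insert_le i T
  rw [M.rank_eq_card_of_indep hT] at h
  omega

lemma rank_lt_rank_insert_of_subset {X Y : Finset γ} {i : γ} (hYX : Y ⊆ X)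
    (h : M.rank X < M.rank (insert i X)) : M.rank Y < M.rank (insert i Y) := by
  have hiX : i ∉ X := fun hi => by rw [insert_eq_self.2 hi] at h; exact lt_irrefl _ h
  -- Extend a basis of `Y` to one of `X`; exchanging against a basis of `insert i X` must add `i`.
  obtain ⟨BY, hBYY, hBY, hBYc⟩ := M.exists_indep_card_eq_rank Y
  obtain ⟨BX, hBYBX, hBXX, hBX, hBXc⟩ :=
    M.exists_indep_superset_card_eq_rank hBY (hBYY.trans hYX)
  obtain ⟨D, hDX, hD, hDc⟩ := M.exists_indep_card_eq_rank (insert i X)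
  obtain ⟨x, hxD, hxBX, hx⟩ := M.indep_exchange hBX hD (by omega)
  obtain rfl : x = i := by
    refine (mem_insert.1 (hDX hxD)).resolve_right fun hxX => ?_
    have := M.card_le_rank hx (insert_subset hxX hBXX)
    rw [card_insert_of_notMem hxBX] at this
    omega
  have hxBY : x ∉ BY := fun hx' => hiX (hYX (hBYY hx'))
  have := M.card_le_rank (M.indep_subset hx (insert_subset_insert x hBYBX))
    (insert_subset_insert x hBYY)
  rw [card_insert_of_notMem hxBY] at this
  omega

variable {M}

lemma indep_of_forall_rank_lt_rank_insert {w : γ → ℝ} (hinj : Function.Injective w)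
    (T : Finset γ)
    (h : ∀ i ∈ T, M.rank (T.filter fun j => w i < w j) <
      M.rank (insert i (T.filter fun j => w i < w j))) : M.Indep T := by
  induction T using induction_on_min_value w with
  | empty => exact M.indep_empty
  | insert a s ha hmin ih =>
    have heavier_of_mem : ∀ j ∈ s,
        ((insert a s).filter fun k => w j < w k) = s.filter fun k => w j < w k := fun j hj => by
      simp [filter_insert, not_lt.2 (hmin j hj)]
    have heavier_self : ((insert a s).filter fun k => w a < w k) = s := by
      rw [filter_insert, if_neg (lt_irrefl _), filter_true_of_mem]
      exact fun x hx => (hmin x hx).lt_of_ne fun hax => ha (hinj hax ▸ hx)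
    have hs : M.Indep s := ih fun j hj => by
      simpa [heavier_of_mem j hj] using h j (mem_insert_of_mem hj)
    have := h a (mem_insert_self a s)
    rw [heavier_self] at this
    exact M.indep_insert_of_rank_lt hs this

lemma indep_OPT {w : γ → ℝ} (hinj : Function.Injective w) (A : Finset γ) :
    M.Indep (M.OPT w A) :=
  indep_of_forall_rank_lt_rank_insert hinj _ fun _ hi =>
    M.rank_lt_rank_insert_of_subset (filter_subset_filter _ (filter_subset _ A))
      (mem_filter.1 hi).2.2

lemma mem_OPT_of_subset {w : γ → ℝ} {A B : Finset γ} {i : γ} (hBA : B ⊆ A) (hiB : i ∈ B)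
    (hi : i ∈ M.OPT w A) : i ∈ M.OPT w B := by
  obtain ⟨-, hw, hr⟩ := mem_filter.1 hi
  exact mem_filter.2 ⟨hiB, hw, M.rank_lt_rank_insert_of_subset (filter_subset_filter _ hBA) hr⟩

lemma card_OPT_sdiff_le_rank_improving {w : γ → ℝ} (hinj : Function.Injective w)
    (F S : Finset γ) :
    ((F ∩ M.OPT w (S ∪ F)) \ S).card ≤ M.rank (M.Improving w S ∩ F) := by
  refine M.card_le_rank (M.indep_subset (M.indep_OPT hinj (S ∪ F))
    fun x hx => (mem_inter.1 (mem_sdiff.1 hx).1).2) fun x hx => ?_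
  obtain ⟨hxFO, hxS⟩ := mem_sdiff.1 hx
  obtain ⟨hxF, hxO⟩ := mem_inter.1 hxFO
  exact mem_inter.2 ⟨mem_filter.2 ⟨mem_univ x, hxS, mem_OPT_of_subset
    (insert_subset (mem_union_right _ hxF) subset_union_left) (mem_insert_self x S) hxO⟩, hxF⟩

end FinMatroid

lemma prodP_insert {p : ℝ} {i : γ} {S : Finset γ} (hi : i ∉ S) :
    (1 - p) * prodP p (insert i S) = p * prodP p S := by
  have hS : S.card < Fintype.card γ := card_lt_univ_of_notMem hi
  obtain ⟨m, hm⟩ : ∃ m, Fintype.card γ - S.card = m + 1 :=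
    ⟨Fintype.card γ - S.card - 1, by omega⟩
  have hm' : Fintype.card γ - (S.card + 1) = m := by omega
  rw [prodP, prodP, card_insert_of_notMem hi, hm, hm']
  ring

/-- `Pr[i ∉ S ∧ E] = (1 - p) Pr[E]` for an event `E` that does not look at whether `i ∈ S`. -/
lemma sum_prodP_mul_ite_mem (p : ℝ) (i : γ) (g : Finset γ → ℝ)
    (hg : ∀ S, g (insert i S) = g S) :
    ∑ S, prodP p S * (if i ∈ S then 0 else g S) = (1 - p) * ∑ S, prodP p S * g S := by
  have huniv : (univ : Finset (Finset γ)) = (insert i (univ.erase i)).powerset := by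
    rw [insert_erase (mem_univ i), powerset_univ]
  rw [huniv, sum_powerset_insert (notMem_erase i _), sum_powerset_insert (notMem_erase i _),
    ← sum_add_distrib, ← sum_add_distrib, mul_sum]
  refine sum_congr rfl fun S hS => ?_
  have hiS : i ∉ S := fun h => notMem_erase i _ (mem_powerset.1 hS h)
  rw [if_neg hiS, if_pos (mem_insert_self i S), hg, mul_zero, add_zero, ← add_mul]
  linear_combination -g S * prodP_insert (p := p) hiS

lemma sum_prodP_mul_card_sdiff (p : ℝ) (X : Finset γ → Finset γ)
    (hX : ∀ S i, i ∈ X (insert i S) ↔ i ∈ X S) :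
    ∑ S, prodP p S * ((X S \ S).card : ℝ) =
      (1 - p) * ∑ S, prodP p S * ((X S).card : ℝ) := by
  have card_sdiff : ∀ S, ((X S \ S).card : ℝ) =
      ∑ i, if i ∈ S then 0 else if i ∈ X S then 1 else 0 := fun S => by
    rw [← filter_univ_mem (X S \ S), natCast_card_filter]
    refine sum_congr rfl fun i _ => ?_
    by_cases h : i ∈ S <;> simp [h]
  have card_eq : ∀ S, ((X S).card : ℝ) = ∑ i, if i ∈ X S then 1 else 0 := fun S => by simp
  simp only [card_sdiff, card_eq, mul_sum]
  rw [sum_comm, sum_comm (s := univ (α := Finset γ))]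
  refine sum_congr rfl fun i _ => ?_
  rw [← mul_sum, ← sum_prodP_mul_ite_mem p i _ fun S => by simp only [hX]]

theorem stmt13_general (M : FinMatroid γ) (w : γ → ℝ)
    (hinj : Function.Injective w) (p : ℝ) (hp0 : 0 < p) (hp1 : p < 1)
    (F : Finset γ) :
    ∑ S : Finset γ, prodP p S * (M.rank (M.Improving w S ∩ F) : ℝ) ≥
      (1 - p) * ∑ S : Finset γ, prodP p S * ((F ∩ M.OPT w (S ∪ F)).card : ℝ) := by
  have hOPT : ∀ S i,
      i ∈ F ∩ M.OPT w (insert i S ∪ F) ↔ i ∈ F ∩ M.OPT w (S ∪ F) := by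
    intro S i
    by_cases hi : i ∈ F
    · rw [insert_union, insert_eq_of_mem (mem_union_right S hi)]
    · simp [hi]
  rw [ge_iff_le, ← sum_prodP_mul_card_sdiff p (fun S => F ∩ M.OPT w (S ∪ F)) hOPT]
  have hprodP : ∀ S : Finset γ, 0 ≤ prodP p S := fun S =>
    mul_nonneg (pow_nonneg hp0.le _) (pow_nonneg (sub_nonneg.2 hp1.le) _)
  exact sum_le_sum fun S _ => mul_le_mul_of_nonneg_left
    (Nat.cast_le.2 (M.card_OPT_sdiff_le_rank_improving hinj F S)) (hprodP S)

/-- `E[rank(R ∩ F)] ≥ (1-p) · E[|F ∩ OPT_w(S ∪ F)|]` where `S` is a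
`p`-sample of the ground set and `R` the corresponding set of improving elements. -/
theorem stmt13 (M : FinMatroid γ) (w : γ → ℝ) (hw : ∀ i, 0 ≤ w i)
    (hinj : Function.Injective w) (p : ℝ) (hp0 : 0 < p) (hp1 : p < 1)
    (F : Finset γ) :
    ∑ S : Finset γ, prodP p S * (M.rank (M.Improving w S ∩ F) : ℝ) ≥
      (1 - p) * ∑ S : Finset γ, prodP p S * ((F ∩ M.OPT w (S ∪ F)).card : ℝ) :=
  stmt13_general M w hinj p hp0 hp1 F
end

section
/- For the 1-uniform matroid on n elements and the improving-element distribution with parameter p (listing elements 1,...,n in decreasing weight order, Pr[R = {1,...,k}] = p(1−p)^k for 0 ≤ k < n and Pr[R = {1,...,n}] = (1−p)^n), any online contention resolution map in the worst-case arrival order 1,2,...,n that is α-competitive must satisfy α ≥ n. -/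
open Finset BigOperators

/-! Write `improvingProb p n k` for the probability of the realization `R = {1,…,k}`.
Since the map cannot tell apart the realizations `{1,…,k}`, `k ≥ i`, when element `i` arrives,
it selects `i` with the same probability `sel i n` in all of them, so
`Pr[i selected] = sel i n · Pr[i ∈ R]` and competitiveness forces `sel i n ≥ 1/a` for every `i`.
In the realization `R = {1,…,n}` these `n` selection probabilities add up to at most `1`,
hence `n / a ≤ 1`. -/

noncomputable def improvingProb (p : ℝ) (n k : ℕ) : ℝ :=
  if k < n then p * (1 - p) ^ k else (1 - p) ^ n

lemma sum_improvingProb_Ico (p : ℝ) {i n : ℕ} (h : i ≤ n) :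
    ∑ k ∈ Ico i (n + 1), improvingProb p n k = (1 - p) ^ i := by
  have hgeom := geom_sum_Ico_mul_neg (1 - p) h
  have hlast : improvingProb p n n = (1 - p) ^ n := if_neg (lt_irrefl n)
  have hbody : ∀ k ∈ Ico i n, improvingProb p n k = p * (1 - p) ^ k :=
    fun k hk => if_pos (mem_Ico.mp hk).2
  rw [sum_Ico_succ_top (by omega), hlast, sum_congr rfl hbody, ← mul_sum]
  linarith

lemma sum_improvingProb_mul_of_online (p : ℝ) {n i : ℕ} (h : i ≤ n) (f : ℕ → ℝ)
    (hinactive : ∀ k, k < i → f k = 0) (honline : ∀ k, i ≤ k → f k = f n) :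
    ∑ k ∈ range (n + 1), improvingProb p n k * f k = (1 - p) ^ i * f n := by
  rw [← sum_range_add_sum_Ico _ (by omega : i ≤ n + 1),
    sum_eq_zero fun k hk => by rw [hinactive k (mem_range.mp hk), mul_zero], zero_add,
    sum_congr rfl fun k hk => by rw [honline k (mem_Ico.mp hk).1], ← sum_mul,
    sum_improvingProb_Ico p h]

theorem stmt17_general (n : ℕ) (p a : ℝ) (hp1 : p < 1) (ha : 0 < a)
    (sel : ℕ → ℕ → ℝ)
    (hinactive : ∀ i k, k < i → sel i k = 0)
    (honline : ∀ i k k', i ≤ k → i ≤ k' → sel i k = sel i k')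
    (hfeas : ∀ k, ∑ i ∈ Finset.Icc 1 k, sel i k ≤ 1)
    (hcomp : ∀ i, 1 ≤ i → i ≤ n →
      ∑ k ∈ Finset.range (n + 1),
          (if k < n then p * (1 - p) ^ k else (1 - p) ^ n) * sel i k ≥
        (1 / a) * (1 - p) ^ i) :
    (n : ℝ) ≤ a := by
  have hsel : ∀ i ∈ Icc 1 n, 1 / a ≤ sel i n := by
    intro i hi
    obtain ⟨hi1, hin⟩ := mem_Icc.mp hi
    have h : 1 / a * (1 - p) ^ i ≤ sel i n * (1 - p) ^ i :=
      (hcomp i hi1 hin).trans_eq <| (sum_improvingProb_mul_of_online p hin (sel i)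
        (hinactive i) fun k hk => honline i k n hk hin).trans (mul_comm _ _)
    exact le_of_mul_le_mul_right h (pow_pos (by linarith) i)
  have hsum : (n : ℝ) * (1 / a) ≤ 1 := by
    simpa using (card_nsmul_le_sum _ _ _ hsel).trans (hfeas n)
  rwa [mul_one_div, div_le_one ha] at hsum

/-- for the 1-uniform matroid on elements `1,…,n` (decreasing weight order)
and the improving-element distribution `Pr[R = {1,…,k}] = p(1-p)^k` for `0 ≤ k < n`,
`Pr[R = {1,…,n}] = (1-p)^n`, any `a`-competitive online contention resolution map in
arrival order `1,2,…,n` must have `a ≥ n`. Here `sel i k` is the probability the map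
selects element `i` when `R = {1,…,k}`; since at step `i` the map cannot distinguish
realizations `{1,…,k}` with `k ≥ i`, `sel i k` is constant over such `k`; at most one
element is selected; `i` cannot be selected unless `i ∈ R`; and `a`-competitiveness says
`Pr[i selected] ≥ (1/a)·Pr[i ∈ R] = (1/a)·(1-p)^i`. -/
theorem stmt17 (n : ℕ) (hn : 0 < n) (p a : ℝ) (hp0 : 0 < p) (hp1 : p < 1) (ha : 0 < a)
    (sel : ℕ → ℕ → ℝ)
    (hnn : ∀ i k, 0 ≤ sel i k)
    (hinactive : ∀ i k, k < i → sel i k = 0)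
    (honline : ∀ i k k', i ≤ k → i ≤ k' → sel i k = sel i k')
    (hfeas : ∀ k, ∑ i ∈ Finset.Icc 1 k, sel i k ≤ 1)
    (hcomp : ∀ i, 1 ≤ i → i ≤ n →
      ∑ k ∈ Finset.range (n + 1),
          (if k < n then p * (1 - p) ^ k else (1 - p) ^ n) * sel i k ≥
        (1 / a) * (1 - p) ^ i) :
    (n : ℝ) ≤ a :=
  stmt17_general n p a hp1 ha sel hinactive honline hfeas hcomp
end
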